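/- Let 𝔉 be a union-closed family of subsets of X = {a₁,…,aₙ}, let S ⊆ 𝔉 be an antichain, and let ℱ = φ_w(𝔉) for w = a₁a₂…aₙ. Then (1/|𝔉[S]|)·Σ_{f ∈ 𝔉[S]} |f| ≥ n/2 + (1/(2|𝔉[S]|))·Σ_{a∈X} |π_w(a) ∩ S↑| − (1/2)·log₂( |S↑| / |𝔉[S]| ). The bound is attained when S = min(𝔉) and 𝔉 is upward-closed. -/

import Mathlib

/-!
Write φ = φ_w. Reimer's argument, by induction along the word, shows that for a union-closed
family the intervals [f, φ(f)], f ∈ 𝔉, are pairwise disjoint. Hence φ is injective on 𝔉, and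
the intervals over f ∈ 𝔉[S] are disjoint subsets of S↑, so Σ 2^|φ(f) \ f| ≤ |S↑|; concavity
of log turns this into Σ |φ(f) \ f| ≤ |𝔉[S]| log₂(|S↑| / |𝔉[S]|).

Every letter occurs in w and rising preserves closure under adding a letter, so H = φ(𝔉[S]) is
upward closed. Pairing η with η \ {a} gives 2 Σ_{η ∈ H} |η| = n |H| + Σ_a |∂_a H|, where
∂_a H = `nonErasable H a` consists of the η ∋ a with η \ {a} ∉ H. It contains π_w(a) ∩ S↑ and,
disjointly from it, the images φ(f) of the f ∈ 𝔉[S] with a ∈ φ(f) \ f; combining the two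
estimates gives the bound. When 𝔉 is upward closed, φ is the identity on 𝔉 and every estimate is an equality.
-/

open Finset

variable {α : Type*} [DecidableEq α]

/-- A family is union-closed if it is closed under pairwise unions. -/
def UnionClosed (F : Finset (Finset α)) : Prop := ∀ f ∈ F, ∀ g ∈ F, f ∪ g ∈ F

/-- One rising step: φ_{S,a}(z) = z ∪ {a} if z ∪ {a} ∉ S, and z otherwise. -/
def riseStep (S : Finset (Finset α)) (a : α) (z : Finset α) : Finset α :=
  if insert a z ∈ S then z else insert a z

/-- Iterated rising function along a word (list of letters): at each step the
current family is replaced by its image and the next letter is risen. -/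
def riseWord (S : Finset (Finset α)) : List α → Finset α → Finset α
  | [], z => z
  | a :: u, z => riseWord (S.image (riseStep S a)) u (riseStep S a z)

/-- The section of a family along (a prefix of) a word. -/
def riseSections (S : Finset (Finset α)) : List α → Finset (Finset α)
  | [] => S
  | a :: u => riseSections (S.image (riseStep S a)) u

/-- The spurious elements σ_w(𝔉,a): the elements η ∈ ℱ = φ_w(𝔉) with
a ∈ η \ φ_w⁻¹(η), i.e. η = φ_w(f) with f ∈ 𝔉, a ∉ f, a ∈ η. -/
def spurious (F : Finset (Finset α)) (w : List α) (a : α) : Finset (Finset α) :=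
  ((F.filter fun f => a ∉ f).image (riseWord F w)).filter fun η => a ∈ η

/-- The pure elements π_w(𝔉,a): the elements η ∈ φ_w(𝔉_a) with η \ {a} ∉ ℱ. -/
def pureF (F : Finset (Finset α)) (w : List α) (a : α) : Finset (Finset α) :=
  ((F.filter fun f => a ∈ f).image (riseWord F w)).filter fun η =>
    η.erase a ∉ F.image (riseWord F w)

/-- The set of minimal elements of a family (under inclusion). -/
def minsF (F : Finset (Finset α)) : Finset (Finset α) :=
  F.filter fun h => ∀ g ∈ F, g ⊆ h → g = h

/-- The principal ideal 𝔉[S] = { f ∈ 𝔉 : ∃ z ∈ S, z ⊆ f }. -/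
def idealF (F S : Finset (Finset α)) : Finset (Finset α) :=
  F.filter fun f => ∃ z ∈ S, z ⊆ f

/-- The intersection T ∩ S↑ of a family T with the up-closure of S. -/
def upFilter (S T : Finset (Finset α)) : Finset (Finset α) :=
  T.filter fun t => ∃ z ∈ S, z ⊆ t


def InsertClosed (S : Finset (Finset α)) (a : α) : Prop := ∀ z ∈ S, insert a z ∈ S

def nonErasable (H : Finset (Finset α)) (a : α) : Finset (Finset α) :=
  H.filter fun η => a ∈ η ∧ η.erase a ∉ H

section RiseStep

variable {S : Finset (Finset α)} {a : α} {z : Finset α}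

lemma riseStep_of_insert_mem (h : insert a z ∈ S) : riseStep S a z = z := if_pos h

lemma riseStep_of_insert_notMem (h : insert a z ∉ S) : riseStep S a z = insert a z := if_neg h

lemma subset_riseStep (S : Finset (Finset α)) (a : α) (z : Finset α) : z ⊆ riseStep S a z := by
  unfold riseStep; split_ifs
  exacts [Subset.rfl, subset_insert a z]

lemma riseStep_subset_insert : riseStep S a z ⊆ insert a z := by
  unfold riseStep; split_ifs
  exacts [subset_insert a z, Subset.rfl]

lemma insert_mem_of_notMem_riseStep (h : a ∉ riseStep S a z) : insert a z ∈ S := by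
  by_contra hz
  exact h (riseStep_of_insert_notMem hz ▸ mem_insert_self a z)

lemma riseStep_eq_self (h : InsertClosed S a) (hz : z ∈ S) : riseStep S a z = z :=
  riseStep_of_insert_mem (h z hz)

lemma mem_image_riseStep_of_insert_mem (hz : z ∈ S) (h : insert a z ∈ S) :
    z ∈ S.image (riseStep S a) :=
  riseStep_of_insert_mem h ▸ mem_image_of_mem _ hz

lemma insert_mem_image_riseStep (hz : z ∈ S) : insert a z ∈ S.image (riseStep S a) := by
  by_cases h : insert a z ∈ S
  · exact mem_image_riseStep_of_insert_mem h (by rwa [insert_idem])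
  · exact riseStep_of_insert_notMem h ▸ mem_image_of_mem _ hz

lemma riseStep_injOn : Set.InjOn (riseStep S a) S := by
  intro f hf g hg h
  simp only [riseStep] at h
  split_ifs at h with hfa hga hga
  · exact h
  · exact absurd (h ▸ hf) hga
  · exact absurd (h ▸ hg) hfa
  · have haf : a ∉ f := fun ha => hfa (by rwa [insert_eq_of_mem ha])
    have hag : a ∉ g := fun ha => hga (by rwa [insert_eq_of_mem ha])
    rw [← erase_insert haf, h, erase_insert hag]

lemma UnionClosed.image_riseStep (hS : UnionClosed S) (a : α) :
    UnionClosed (S.image (riseStep S a)) := by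
  simp only [UnionClosed, forall_mem_image]
  intro f hf g hg
  have hfg : f ∪ g ∈ S := hS f hf g hg
  by_cases hfa : insert a f ∈ S <;> by_cases hga : insert a g ∈ S
  · rw [riseStep_of_insert_mem hfa, riseStep_of_insert_mem hga]
    exact mem_image_riseStep_of_insert_mem hfg (by rw [← insert_union]; exact hS _ hfa g hg)
  · rw [riseStep_of_insert_mem hfa, riseStep_of_insert_notMem hga, union_insert]
    exact insert_mem_image_riseStep hfg
  · rw [riseStep_of_insert_notMem hfa, riseStep_of_insert_mem hga, insert_union]
    exact insert_mem_image_riseStep hfg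
  · rw [riseStep_of_insert_notMem hfa, riseStep_of_insert_notMem hga, insert_union,
      union_insert, insert_idem]
    exact insert_mem_image_riseStep hfg

lemma insertClosed_image_riseStep_self : InsertClosed (S.image (riseStep S a)) a := by
  simp only [InsertClosed, forall_mem_image]
  intro z hz
  by_cases h : insert a z ∈ S
  · rw [riseStep_of_insert_mem h]
    exact insert_mem_image_riseStep hz
  · rw [riseStep_of_insert_notMem h, insert_idem]
    exact riseStep_of_insert_notMem h ▸ mem_image_of_mem (riseStep S a) hz

lemma InsertClosed.image_riseStep (h : InsertClosed S a) (b : α) :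
    InsertClosed (S.image (riseStep S b)) a := by
  simp only [InsertClosed, forall_mem_image]
  intro z hz
  by_cases hb : insert b z ∈ S
  · rw [riseStep_of_insert_mem hb]
    exact mem_image_riseStep_of_insert_mem (h z hz) (insert_comm a b z ▸ h _ hb)
  · rw [riseStep_of_insert_notMem hb, insert_comm]
    exact insert_mem_image_riseStep (h z hz)

end RiseStep

section RiseWord

variable {S : Finset (Finset α)} {a : α} {z : Finset α}

lemma subset_riseWord (S : Finset (Finset α)) (u : List α) (z : Finset α) :
    z ⊆ riseWord S u z := by
  induction u generalizing S z with
  | nil => exact Subset.rfl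
  | cons b u ih => exact (subset_riseStep S b z).trans (ih _ _)

lemma image_riseWord_cons (S : Finset (Finset α)) (b : α) (u : List α) :
    S.image (riseWord S (b :: u)) =
      (S.image (riseStep S b)).image (riseWord (S.image (riseStep S b)) u) := by
  rw [image_image]; rfl

lemma InsertClosed.image_riseWord (h : InsertClosed S a) (u : List α) :
    InsertClosed (S.image (riseWord S u)) a := by
  induction u generalizing S with
  | nil => simpa [riseWord] using h
  | cons b u ih => rw [image_riseWord_cons]; exact ih (h.image_riseStep b)

lemma insertClosed_image_riseWord {u : List α} (ha : a ∈ u) :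
    InsertClosed (S.image (riseWord S u)) a := by
  induction u generalizing S with
  | nil => cases ha
  | cons b u ih =>
    rw [image_riseWord_cons]
    rcases List.mem_cons.1 ha with rfl | ha
    · exact insertClosed_image_riseStep_self.image_riseWord u
    · exact ih ha

lemma image_riseStep_eq_self (h : InsertClosed S a) : S.image (riseStep S a) = S :=
  (image_congr fun _ hz => riseStep_eq_self h hz).trans image_id

lemma riseWord_eq_self (h : ∀ a, InsertClosed S a) (u : List α) (hz : z ∈ S) :
    riseWord S u z = z := by
  induction u with
  | nil => rfl
  | cons b u ih =>
    change riseWord (S.image (riseStep S b)) u (riseStep S b z) = z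
    rw [riseStep_eq_self (h b) hz, image_riseStep_eq_self (h b), ih]

end RiseWord

section Reimer

variable {T : Finset (Finset α)} {a : α} {u : List α} {f g : Finset α}

-- Equivalently, the intervals `Icc f (riseWord T u f)`, `f ∈ T`, are pairwise disjoint.
def RiseSeparated (T : Finset (Finset α)) (u : List α) : Prop :=
  ∀ f ∈ T, ∀ g ∈ T, g ⊆ riseWord T u f → f ⊆ riseWord T u g → f = g

-- Here `f` is kept although `insert a f ∈ T`. Separation of `f, f ∪ g` in the risen family
-- gives `g ⊆ f`, and separation of `insert a f, riseStep T a g` gives `g = insert a f`.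
lemma RiseSeparated.not_mixed (hT : UnionClosed T) (h : RiseSeparated (T.image (riseStep T a)) u)
    (hf : f ∈ T) (hg : g ∈ T) (haf : a ∉ riseStep T a f) (hag : a ∈ riseStep T a g)
    (h1 : g ⊆ riseWord (T.image (riseStep T a)) u (riseStep T a f))
    (h2 : f ⊆ riseWord (T.image (riseStep T a)) u (riseStep T a g)) : False := by
  have hfa : insert a f ∈ T := insert_mem_of_notMem_riseStep haf
  rw [riseStep_of_insert_mem hfa] at haf h1
  have hfa' : insert a (insert a f) ∈ T := by rwa [insert_idem]
  have hgf : g ⊆ f := by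
    have hfg := h f (mem_image_riseStep_of_insert_mem hf hfa) (f ∪ g)
      (mem_image_riseStep_of_insert_mem (hT f hf g hg) (insert_union a f g ▸ hT _ hfa g hg))
      (union_subset (subset_riseWord _ _ f) h1) (subset_union_left.trans (subset_riseWord _ _ _))
    exact union_eq_left.1 hfg.symm
  have hfg : insert a f = riseStep T a g :=
    h _ (mem_image_riseStep_of_insert_mem hfa hfa') _ (mem_image_of_mem _ hg)
      (riseStep_subset_insert.trans ((insert_subset_insert a hgf).trans (subset_riseWord _ _ _)))
      (insert_subset (subset_riseWord _ _ _ hag) h2)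
  have hga : insert a f = g := riseStep_injOn hfa hg ((riseStep_of_insert_mem hfa').trans hfg)
  exact haf (hgf (hga ▸ mem_insert_self a f))

lemma RiseSeparated.cons (hT : UnionClosed T) (h : RiseSeparated (T.image (riseStep T a)) u) :
    RiseSeparated T (a :: u) := by
  intro f hf g hg h1 h2
  change g ⊆ riseWord (T.image (riseStep T a)) u (riseStep T a f) at h1
  change f ⊆ riseWord (T.image (riseStep T a)) u (riseStep T a g) at h2
  have hf' := mem_image_of_mem (riseStep T a) hf
  have hg' := mem_image_of_mem (riseStep T a) hg
  by_cases haf : a ∈ riseStep T a f <;> by_cases hag : a ∈ riseStep T a g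
  · refine riseStep_injOn hf hg (h _ hf' _ hg' ?_ ?_)
    · exact riseStep_subset_insert.trans (insert_subset (subset_riseWord _ _ _ haf) h1)
    · exact riseStep_subset_insert.trans (insert_subset (subset_riseWord _ _ _ hag) h2)
  · exact (h.not_mixed hT hg hf hag haf h2 h1).elim
  · exact (h.not_mixed hT hf hg haf hag h1 h2).elim
  · rw [riseStep_of_insert_mem (insert_mem_of_notMem_riseStep haf)] at h1 hf'
    rw [riseStep_of_insert_mem (insert_mem_of_notMem_riseStep hag)] at h2 hg'
    exact h f hf' g hg' h1 h2

theorem UnionClosed.riseSeparated (hT : UnionClosed T) (u : List α) : RiseSeparated T u := by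
  induction u generalizing T with
  | nil => exact fun f _ g _ h1 h2 => Subset.antisymm h2 h1
  | cons a u ih => exact RiseSeparated.cons hT (ih (hT.image_riseStep a))

lemma UnionClosed.injOn_riseWord (hT : UnionClosed T) (u : List α) :
    Set.InjOn (riseWord T u) T := fun f hf g hg h =>
  hT.riseSeparated u f hf g hg (h ▸ subset_riseWord T u g) (h ▸ subset_riseWord T u f)

lemma UnionClosed.subset_of_subset_riseWord (hT : UnionClosed T) (hf : f ∈ T) (hg : g ∈ T)
    (h : g ⊆ riseWord T u f) : g ⊆ f := by
  have hfg := hT.riseSeparated u f hf (f ∪ g) (hT f hf g hg)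
    (union_subset (subset_riseWord T u f) h) (subset_union_left.trans (subset_riseWord _ _ _))
  exact union_eq_left.1 hfg.symm

lemma UnionClosed.pairwiseDisjoint_Icc_riseWord (hT : UnionClosed T) (u : List α) :
    (T : Set (Finset α)).PairwiseDisjoint fun f => Icc f (riseWord T u f) := by
  intro f hf g hg hne
  refine disjoint_left.2 fun t htf htg => hne ?_
  rw [mem_Icc] at htf htg
  exact hT.riseSeparated u f hf g hg (htg.1.trans htf.2) (htf.1.trans htg.2)

lemma UnionClosed.erase_riseWord_notMem (hT : UnionClosed T) (hf : f ∈ T) (haf : a ∉ f)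
    (ha : a ∈ riseWord T u f) : (riseWord T u f).erase a ∉ T.image (riseWord T u) := by
  intro hmem
  obtain ⟨g, hg, hgf⟩ := mem_image.1 hmem
  have hfg : f = g := hT.riseSeparated u f hf g hg
    ((subset_riseWord T u g).trans (hgf ▸ erase_subset a _))
    (hgf ▸ subset_erase.2 ⟨subset_riseWord T u f, haf⟩)
  subst hfg
  exact notMem_erase a _ (hgf ▸ ha)

end Reimer

section Counting

lemma sum_card_filter_mem [Fintype α] {β : Type*} (s : Finset β) (t : β → Finset α) :
    ∑ a, #{x ∈ s | a ∈ t x} = ∑ x ∈ s, #(t x) := by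
  simp_rw [card_eq_sum_ones, sum_filter]
  rw [sum_comm]
  simp

lemma nonErasable_subset {H : Finset (Finset α)} {a : α} : nonErasable H a ⊆ H := filter_subset _ _

lemma InsertClosed.two_mul_card_filter_mem {H : Finset (Finset α)} {a : α}
    (h : InsertClosed H a) : 2 * #{η ∈ H | a ∈ η} = #H + #(nonErasable H a) := by
  have hH := card_filter_add_card_filter_not (s := H) (a ∈ ·)
  have hmem : #{η ∈ {η ∈ H | a ∈ η} | η.erase a ∈ H} + #(nonErasable H a) =
      #{η ∈ H | a ∈ η} := by
    rw [nonErasable, ← filter_filter]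
    exact card_filter_add_card_filter_not _
  have hbij : #{η ∈ H | a ∉ η} = #{η ∈ {η ∈ H | a ∈ η} | η.erase a ∈ H} := by
    refine card_nbij' (insert a) (·.erase a) ?_ ?_ ?_ ?_
    · intro η hη
      simp only [coe_filter, mem_filter] at hη ⊢
      exact ⟨⟨h η hη.1, mem_insert_self a η⟩, by rw [erase_insert hη.2]; exact hη.1⟩
    · intro η hη
      simp only [coe_filter, mem_filter] at hη ⊢
      exact ⟨hη.2, notMem_erase a η⟩
    · intro η hη
      exact erase_insert (mem_filter.1 hη).2
    · intro η hη
      exact insert_erase (mem_filter.1 (mem_filter.1 hη).1).2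
  omega

lemma two_mul_sum_card_eq [Fintype α] {H : Finset (Finset α)} (h : ∀ a, InsertClosed H a) :
    2 * ∑ η ∈ H, #η = Fintype.card α * #H + ∑ a, #(nonErasable H a) := by
  rw [← sum_card_filter_mem H (fun η => η), mul_sum]
  simp_rw [(h _).two_mul_card_filter_mem]
  rw [sum_add_distrib, sum_const, card_univ, smul_eq_mul]

lemma sum_le_card_mul_logb_of_sum_two_pow_le {β : Type*} {s : Finset β} (hs : s.Nonempty)
    (d : β → ℕ) {U : ℕ} (h : ∑ i ∈ s, 2 ^ d i ≤ U) :
    ∑ i ∈ s, (d i : ℝ) ≤ #s * Real.logb 2 (U / #s) := by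
  have hN : (0 : ℝ) < #s := by exact_mod_cast hs.card_pos
  have jensen := strictConcaveOn_log_Ioi.concaveOn.le_map_sum (t := s)
    (w := fun _ => (#s : ℝ)⁻¹) (p := fun i => (2 : ℝ) ^ d i) (fun _ _ => by positivity)
    (by simp [hN.ne']) (fun _ _ => by simp [Set.mem_Ioi])
  simp only [smul_eq_mul, Real.log_pow, ← mul_sum, ← sum_mul] at jensen
  have hU : (#s : ℝ)⁻¹ * ∑ i ∈ s, (2 : ℝ) ^ d i ≤ U / #s := by
    rw [inv_mul_eq_div]
    gcongr
    exact_mod_cast h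
  have hlog := jensen.trans (Real.log_le_log (by positivity) hU)
  rw [inv_mul_le_iff₀ hN] at hlog
  rw [Real.logb, mul_div_assoc', le_div_iff₀ (Real.log_pos one_lt_two)]
  exact hlog

end Counting

section RisenIdeal

variable {F S : Finset (Finset α)} {w : List α} {a : α}

lemma idealF_subset : idealF F S ⊆ F := filter_subset _ _

lemma insertClosed_image_idealF (hF : UnionClosed F) (hS : S ⊆ F) (ha : a ∈ w) :
    InsertClosed ((idealF F S).image (riseWord F w)) a := by
  simp only [InsertClosed, forall_mem_image]
  intro f hf
  obtain ⟨hfF, z, hz, hzf⟩ := mem_filter.1 hf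
  obtain ⟨g, hg, hgf⟩ := mem_image.1 (insertClosed_image_riseWord ha _ (mem_image_of_mem _ hfF))
  have hzg : z ⊆ g := by
    refine hF.subset_of_subset_riseWord (u := w) hg (hS hz) ?_
    rw [hgf]
    exact hzf.trans ((subset_riseWord F w f).trans (subset_insert a _))
  exact mem_image.2 ⟨g, mem_filter.2 ⟨hg, z, hz, hzg⟩, hgf⟩

lemma card_upFilter_pureF_add_le (hF : UnionClosed F) (hS : S ⊆ F) :
    #(upFilter S (pureF F w a)) + #{f ∈ idealF F S | a ∈ riseWord F w f \ f} ≤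
      #(nonErasable ((idealF F S).image (riseWord F w)) a) := by
  set Φ := riseWord F w
  set G := idealF F S
  have hpure : upFilter S (pureF F w a) ⊆
      {f ∈ G | a ∈ f ∧ (Φ f).erase a ∉ F.image Φ}.image Φ := by
    intro η hη
    simp only [upFilter, pureF, mem_filter] at hη
    obtain ⟨⟨hη, herase⟩, z, hz, hzg⟩ := hη
    obtain ⟨g, hg, rfl⟩ := mem_image.1 hη
    obtain ⟨hg, hag⟩ := mem_filter.1 hg
    exact mem_image_of_mem _ (mem_filter.2
      ⟨mem_filter.2 ⟨hg, z, hz, hF.subset_of_subset_riseWord hg (hS hz) hzg⟩, hag, herase⟩)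
  have hmaps : ∀ f ∈ G, (a ∈ f ∧ (Φ f).erase a ∉ F.image Φ) ∨ a ∈ Φ f \ f →
      Φ f ∈ nonErasable (G.image Φ) a := by
    intro f hf hP
    have ha : a ∈ Φ f := hP.elim (fun h => subset_riseWord F w f h.1) (fun h => (mem_sdiff.1 h).1)
    have herase : (Φ f).erase a ∉ F.image Φ :=
      hP.elim And.right fun h => hF.erase_riseWord_notMem (idealF_subset hf) (mem_sdiff.1 h).2 ha
    exact mem_filter.2
      ⟨mem_image_of_mem _ hf, ha, fun hc => herase (image_subset_image idealF_subset hc)⟩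
  have hinj : Set.InjOn Φ G := (hF.injOn_riseWord w).mono (coe_subset.2 idealF_subset)
  calc #(upFilter S (pureF F w a)) + #{f ∈ G | a ∈ Φ f \ f}
      ≤ #{f ∈ G | a ∈ f ∧ (Φ f).erase a ∉ F.image Φ} + #{f ∈ G | a ∈ Φ f \ f} :=
        Nat.add_le_add_right ((card_le_card hpure).trans card_image_le) _
    _ = #{f ∈ G | (a ∈ f ∧ (Φ f).erase a ∉ F.image Φ) ∨ a ∈ Φ f \ f} := by
        rw [filter_or, card_union_of_disjoint]
        exact disjoint_filter.2 fun f _ h1 h2 => (mem_sdiff.1 h2).2 h1.1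
    _ = #({f ∈ G | (a ∈ f ∧ (Φ f).erase a ∉ F.image Φ) ∨ a ∈ Φ f \ f}.image Φ) :=
        (card_image_of_injOn (hinj.mono (coe_subset.2 (filter_subset _ _)))).symm
    _ ≤ #(nonErasable (G.image Φ) a) :=
        card_le_card <| image_subset_iff.2 fun f hf =>
          hmaps f (mem_filter.1 hf).1 (mem_filter.1 hf).2

lemma sum_two_pow_card_sdiff_riseWord_le [Fintype α] (hF : UnionClosed F) (w : List α)
    (S : Finset (Finset α)) :
    ∑ f ∈ idealF F S, 2 ^ #(riseWord F w f \ f) ≤ #(upFilter S univ) := by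
  calc ∑ f ∈ idealF F S, 2 ^ #(riseWord F w f \ f)
      = ∑ f ∈ idealF F S, #(Icc f (riseWord F w f)) := by
        refine sum_congr rfl fun f _ => ?_
        rw [card_Icc_finset (subset_riseWord F w f), card_sdiff_of_subset (subset_riseWord F w f)]
    _ = #((idealF F S).biUnion fun f => Icc f (riseWord F w f)) :=
        (card_biUnion <|
          (hF.pairwiseDisjoint_Icc_riseWord w).subset (coe_subset.2 idealF_subset)).symm
    _ ≤ #(upFilter S univ) := by
        refine card_le_card (biUnion_subset.2 fun f hf t ht => ?_)
        obtain ⟨-, z, hz, hzf⟩ := mem_filter.1 hf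
        exact mem_filter.2 ⟨mem_univ t, z, hz, hzf.trans (mem_Icc.1 ht).1⟩

lemma card_mul_add_sum_card_pure_le [Fintype α] (hF : UnionClosed F) (hS : S ⊆ F)
    (hall : ∀ x : α, x ∈ w) :
    Fintype.card α * #(idealF F S) + ∑ a, #(upFilter S (pureF F w a)) ≤
      2 * ∑ f ∈ idealF F S, #f + ∑ f ∈ idealF F S, #(riseWord F w f \ f) := by
  have hinj : Set.InjOn (riseWord F w) (idealF F S) :=
    (hF.injOn_riseWord w).mono (coe_subset.2 idealF_subset)
  have hpair := two_mul_sum_card_eq fun a => insertClosed_image_idealF (S := S) hF hS (hall a)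
  rw [sum_image hinj, card_image_of_injOn hinj] at hpair
  have hsplit : ∑ f ∈ idealF F S, #(riseWord F w f) =
      ∑ f ∈ idealF F S, #f + ∑ f ∈ idealF F S, #(riseWord F w f \ f) := by
    rw [← sum_add_distrib]
    exact sum_congr rfl fun f _ => by
      rw [add_comm, card_sdiff_add_card_eq_card (subset_riseWord F w f)]
  have hcoord := sum_le_sum fun a (_ : a ∈ univ) =>
    card_upFilter_pureF_add_le (w := w) (a := a) hF hS
  rw [sum_add_distrib, sum_card_filter_mem] at hcoord
  omega

end RisenIdeal

section UpwardClosed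

variable {F T : Finset (Finset α)}

lemma exists_mem_minsF_subset {f : Finset α} (hf : f ∈ F) : ∃ z ∈ minsF F, z ⊆ f := by
  obtain ⟨z, hzf, hz, hmin⟩ := exists_minimal_le_of_wellFoundedLT (· ∈ F) f hf
  exact ⟨z, mem_filter.2 ⟨hz, fun g hg hgz => le_antisymm hgz (hmin hg hgz)⟩, hzf⟩

lemma minsF_subset : minsF F ⊆ F := filter_subset _ _

lemma upFilter_minsF_of_subset (hT : T ⊆ F) : upFilter (minsF F) T = T :=
  filter_true_of_mem fun _ ht => exists_mem_minsF_subset (hT ht)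

lemma idealF_minsF : idealF F (minsF F) = F := upFilter_minsF_of_subset Subset.rfl

lemma upFilter_minsF_univ [Fintype α] (hup : ∀ f ∈ F, ∀ g : Finset α, f ⊆ g → g ∈ F) :
    upFilter (minsF F) univ = F := by
  ext t
  simp only [upFilter, mem_filter, mem_univ, true_and]
  exact ⟨fun ⟨z, hz, hzt⟩ => hup z (minsF_subset hz) t hzt, exists_mem_minsF_subset⟩

lemma pureF_eq_nonErasable (h : ∀ a, InsertClosed F a) (w : List α) (a : α) :
    pureF F w a = nonErasable F a := by
  have hid : ∀ T ⊆ F, T.image (riseWord F w) = T := fun T hT =>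
    (image_congr fun _ hf => riseWord_eq_self h w (hT hf)).trans image_id
  rw [pureF, hid _ (filter_subset _ _), hid _ Subset.rfl, nonErasable, filter_filter]

end UpwardClosed

theorem stmt_16_general {α : Type*} [DecidableEq α] [Fintype α]
    (F : Finset (Finset α)) (hF : UnionClosed F)
    (w : List α) (hall : ∀ x : α, x ∈ w)
    (S : Finset (Finset α)) (hS : S ⊆ F) (hSne : S.Nonempty) :
    (1 / ((idealF F S).card : ℝ)) * ∑ f ∈ idealF F S, (f.card : ℝ) ≥
      (Fintype.card α : ℝ) / 2 +
      (1 / (2 * ((idealF F S).card : ℝ))) * ∑ a : α, ((upFilter S (pureF F w a)).card : ℝ) -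
      (1 / 2) * Real.logb 2
        (((upFilter S (Finset.univ : Finset (Finset α))).card : ℝ) / ((idealF F S).card : ℝ)) ∧
    ((S = minsF F ∧ ∀ f ∈ F, ∀ g : Finset α, f ⊆ g → g ∈ F) →
      (1 / ((idealF F S).card : ℝ)) * ∑ f ∈ idealF F S, (f.card : ℝ) =
        (Fintype.card α : ℝ) / 2 +
        (1 / (2 * ((idealF F S).card : ℝ))) * ∑ a : α, ((upFilter S (pureF F w a)).card : ℝ) -
        (1 / 2) * Real.logb 2
          (((upFilter S (Finset.univ : Finset (Finset α))).card : ℝ) / ((idealF F S).card : ℝ))) := by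
  obtain ⟨z, hz⟩ := hSne
  have hG : (idealF F S).Nonempty := ⟨z, mem_filter.2 ⟨hS hz, z, hz, Subset.rfl⟩⟩
  have hN : (0 : ℝ) < #(idealF F S) := by exact_mod_cast hG.card_pos
  refine ⟨?_, ?_⟩
  · have hcount :
        (Fintype.card α : ℝ) * #(idealF F S) + ∑ a, (#(upFilter S (pureF F w a)) : ℝ) ≤
          2 * ∑ f ∈ idealF F S, (#f : ℝ) + ∑ f ∈ idealF F S, (#(riseWord F w f \ f) : ℝ) := by
      exact_mod_cast card_mul_add_sum_card_pure_le hF hS hall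
    have hjensen := sum_le_card_mul_logb_of_sum_two_pow_le hG _
      (sum_two_pow_card_sdiff_riseWord_le hF w S)
    field_simp
    linarith
  · rintro ⟨rfl, hup⟩
    have hins : ∀ a, InsertClosed F a := fun a f hf => hup f hf _ (subset_insert a f)
    have hpair : 2 * ∑ f ∈ F, (#f : ℝ) = Fintype.card α * #F + ∑ a, (#(nonErasable F a) : ℝ) := by
      exact_mod_cast two_mul_sum_card_eq hins
    rw [idealF_minsF] at hN ⊢
    simp_rw [upFilter_minsF_univ hup, div_self hN.ne', Real.logb_one, pureF_eq_nonErasable hins,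
      upFilter_minsF_of_subset nonErasable_subset]
    field_simp
    linarith

/-- Theorem 5.11: for an antichain S ⊆ 𝔉,
(1/|𝔉[S]|)Σ_{f∈𝔉[S]}|f| ≥ n/2 + (1/(2|𝔉[S]|))Σ_{a∈X}|π_w(a) ∩ S↑|
  − (1/2)log₂(|S↑|/|𝔉[S]|),
and the bound is attained when S = min(𝔉) and 𝔉 is upward-closed. -/
theorem stmt_16 {α : Type*} [DecidableEq α] [Fintype α]
    (F : Finset (Finset α)) (hF : UnionClosed F)
    (hcov : ∀ x : α, ∃ f ∈ F, x ∈ f)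
    (w : List α) (hnd : w.Nodup) (hall : ∀ x : α, x ∈ w)
    (S : Finset (Finset α)) (hS : S ⊆ F) (hSne : S.Nonempty)
    (hanti : ∀ f ∈ S, ∀ g ∈ S, f ⊆ g → f = g) :
    (1 / ((idealF F S).card : ℝ)) * ∑ f ∈ idealF F S, (f.card : ℝ) ≥
      (Fintype.card α : ℝ) / 2 +
      (1 / (2 * ((idealF F S).card : ℝ))) * ∑ a : α, ((upFilter S (pureF F w a)).card : ℝ) -
      (1 / 2) * Real.logb 2
        (((upFilter S (Finset.univ : Finset (Finset α))).card : ℝ) / ((idealF F S).card : ℝ)) ∧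
    ((S = minsF F ∧ ∀ f ∈ F, ∀ g : Finset α, f ⊆ g → g ∈ F) →
      (1 / ((idealF F S).card : ℝ)) * ∑ f ∈ idealF F S, (f.card : ℝ) =
        (Fintype.card α : ℝ) / 2 +
        (1 / (2 * ((idealF F S).card : ℝ))) * ∑ a : α, ((upFilter S (pureF F w a)).card : ℝ) -
        (1 / 2) * Real.logb 2
          (((upFilter S (Finset.univ : Finset (Finset α))).card : ℝ) / ((idealF F S).card : ℝ))) :=
  stmt_16_general F hF w hall S hS hSne
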